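/- Let M be a locally compact metric space with a continuous flow θ, and X a nonempty, compact, invariant, proper subset of M. Suppose X is non-stagnant (i.e., it is not the case that there exist x, y ∈ M \ X with ∅ ≠ α(x) ⊆ X and ∅ ≠ ω(y) ⊆ X). If z ∈ A⁺(X) (i.e., ω(z) intersects both X and M \ X), then for every neighbourhood U of X there exists y ∈ ω(z) with the full orbit O(y) ⊆ U \ X. -/

import Mathlib

open Set Filter Metric Topology TopologicalSpace

variable {M : Type*} [MetricSpace M]

/-- The full orbit of a point under a flow. -/
def orbit (ϕ : Flow ℝ M) (x : M) : Set M := Set.range fun t => ϕ t x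

/-- The positive (forward) half orbit. -/
def posOrbit (ϕ : Flow ℝ M) (x : M) : Set M := {y | ∃ t : ℝ, 0 ≤ t ∧ ϕ t x = y}

/-- The negative (backward) half orbit. -/
def negOrbit (ϕ : Flow ℝ M) (x : M) : Set M := {y | ∃ t : ℝ, t ≤ 0 ∧ ϕ t x = y}

/-- Positive orbital saturation of a set. -/
def posSat (ϕ : Flow ℝ M) (s : Set M) : Set M := ⋃ x ∈ s, posOrbit ϕ x

/-- The ω-limit set of a point. -/
def omegaSet (ϕ : Flow ℝ M) (x : M) : Set M :=
  ⋂ t : ℝ, closure {y | ∃ s : ℝ, t ≤ s ∧ ϕ s x = y}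

/-- The α-limit set of a point. -/
def alphaSet (ϕ : Flow ℝ M) (x : M) : Set M :=
  ⋂ t : ℝ, closure {y | ∃ s : ℝ, s ≤ t ∧ ϕ s x = y}

/-- A set is invariant under the flow. -/
def flowInv (ϕ : Flow ℝ M) (s : Set M) : Prop := ∀ t : ℝ, ϕ t '' s = s

/-- Stability of a set: every neighbourhood contains a positively invariant neighbourhood. -/
def Stable (ϕ : Flow ℝ M) (K : Set M) : Prop :=
  ∀ U ∈ 𝓝ˢ K, ∃ V ∈ 𝓝ˢ K, posSat ϕ V ⊆ U

/-- The set of points whose ω-limit set is nonempty and contained in `K`. -/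
def Bplus (ϕ : Flow ℝ M) (K : Set M) : Set M :=
  {x | (omegaSet ϕ x).Nonempty ∧ omegaSet ϕ x ⊆ K}

/-- `K` is an attractor: stable and `B⁺(K)` is a neighbourhood of `K`. -/
def IsAttractor (ϕ : Flow ℝ M) (K : Set M) : Prop :=
  Stable ϕ K ∧ Bplus ϕ K ∈ 𝓝ˢ K

/-- `K` is a repeller: an attractor for the time-reversed flow. -/
def IsRepeller (ϕ : Flow ℝ M) (K : Set M) : Prop :=
  IsAttractor ϕ.reverse K

/-- A minimal set of the flow. -/
def IsMinimalSet (ϕ : Flow ℝ M) (s : Set M) : Prop :=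
  s.Nonempty ∧ IsClosed s ∧ flowInv ϕ s ∧
    ∀ t, t ⊆ s → t.Nonempty → IsClosed t → flowInv ϕ t → t = s

/-- `K` is stagnant. -/
def Stagnant (ϕ : Flow ℝ M) (K : Set M) : Prop :=
  ∃ x ∉ K, ∃ y ∉ K, (alphaSet ϕ x).Nonempty ∧ alphaSet ϕ x ⊆ K ∧
    (omegaSet ϕ y).Nonempty ∧ omegaSet ϕ y ⊆ K

/-- `K` is isolated from minimal sets. -/
def IsolatedFromMinimals (ϕ : Flow ℝ M) (K : Set M) : Prop :=
  ∃ U ∈ 𝓝ˢ K, ∀ s, s ⊆ U \ K → ¬ IsMinimalSet ϕ s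

/-- `x` is a periodic point with minimal period `p`: the set of periods is `pℤ`. -/
def MinPeriod (ϕ : Flow ℝ M) (x : M) (p : ℝ) : Prop :=
  0 < p ∧ {t : ℝ | ϕ t x = x} = {t : ℝ | ∃ n : ℤ, t = n * p}

/-- `x` is an equilibrium. -/
def IsEquilibrium (ϕ : Flow ℝ M) (x : M) : Prop := ∀ t : ℝ, ϕ t x = x


/-!
Suppose no point of `ω(z)` has its orbit in `U \ X`, and pick `p ∈ ω(z) ∩ X`, `q ∈ ω(z) \ X`
and a compact neighbourhood `N ⊆ U` of `X` missing `q`. The orbit of `z` returns ever closer to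
`p` and leaves `N` in between; the maximal orbit segments inside `N` around these returns have
endpoints on `N \ interior N`, accumulating at `u, v ∈ ω(z) \ X`. As the orbit of `p` stays in
`X`, the time from entrance to return and from return to exit tends to infinity, so the forward
orbit of `u` and the backward orbit of `v` stay in `N`. Hence `ω(u)` and `α(v)` are nonempty
subsets of `ω(z) ∩ N`, invariant; were one of them not inside `X`, it would contain a point
whose orbit lies in `U \ X`. So both lie in `X`, and `u`, `v` show that `X` is stagnant.
-/

section LastExit

variable {α : Type*} [TopologicalSpace α] {γ : ℝ → α} {W : Set α}

lemma exists_last_notMem_before (hγ : Continuous γ) (hW : IsOpen W) {b a : ℝ} (hba : b ≤ a)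
    (hb : γ b ∉ W) : ∃ c ∈ Icc b a, γ c ∉ W ∧ ∀ t ∈ Ioc c a, γ t ∈ W := by
  set S := Icc b a ∩ γ ⁻¹' Wᶜ
  have hS : IsClosed S := isClosed_Icc.inter (hW.isClosed_compl.preimage hγ)
  have hbdd : BddAbove S := bddAbove_Icc.mono inter_subset_left
  obtain ⟨hc, hcW⟩ := hS.csSup_mem ⟨b, ⟨le_rfl, hba⟩, hb⟩ hbdd
  refine ⟨sSup S, hc, hcW, fun t ht => ?_⟩
  by_contra htW
  exact (le_csSup hbdd ⟨⟨hc.1.trans ht.1.le, ht.2⟩, htW⟩).not_gt ht.1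

lemma exists_first_notMem_after (hγ : Continuous γ) (hW : IsOpen W) {a b : ℝ} (hab : a ≤ b)
    (hb : γ b ∉ W) : ∃ d ∈ Icc a b, γ d ∉ W ∧ ∀ t ∈ Ico a d, γ t ∈ W := by
  obtain ⟨c, hc, hcW, hW'⟩ :=
    exists_last_notMem_before (hγ.comp continuous_neg) hW (neg_le_neg hab) (by simpa using hb)
  refine ⟨-c, ⟨le_neg.mpr hc.2, neg_le.mpr hc.1⟩, hcW, fun t ht => ?_⟩
  simpa using hW' (-t) ⟨lt_neg.mpr ht.2, neg_le_neg ht.1⟩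

end LastExit

lemma exists_isCompact_subset_interior_of_notMem {α : Type*} [TopologicalSpace α]
    [T1Space α] [LocallyCompactSpace α] {K U : Set α} (hK : IsCompact K) (hU : U ∈ 𝓝ˢ K) {q : α}
    (hq : q ∉ K) : ∃ N, IsCompact N ∧ K ⊆ interior N ∧ N ⊆ U ∧ q ∉ N := by
  have hUq : U ∩ {q}ᶜ ∈ 𝓝ˢ K :=
    inter_mem hU (isOpen_compl_singleton.mem_nhdsSet.mpr (by simpa using hq))
  obtain ⟨N, ⟨hKN, hN⟩, hNU⟩ := hK.nhdsSet_basis_isCompact.mem_iff.mp hUq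
  exact ⟨N, hN, subset_interior_iff_mem_nhdsSet.mpr hKN, fun x hx => (hNU hx).1,
    fun h => (hNU h).2 rfl⟩

section Flow

variable {ϕ : Flow ℝ M}

lemma flowInv.apply_mem_iff {S : Set M} (hS : flowInv ϕ S) {x : M} {t : ℝ} :
    ϕ t x ∈ S ↔ x ∈ S := by
  have h := ϕ.image_eq_preimage_symm (-t) S
  rw [neg_neg, hS] at h
  exact (Set.ext_iff.mp h x).symm

lemma flowInv_of_forall_apply_mem {S : Set M} (h : ∀ t, ∀ x ∈ S, ϕ t x ∈ S) : flowInv ϕ S :=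
  fun t => (image_subset_iff.mpr fun x hx => h t x hx).antisymm fun x hx =>
    ⟨ϕ (-t) x, h _ x hx, by rw [← ϕ.map_add, add_neg_cancel, ϕ.map_zero_apply]⟩

lemma flowInv.reverse {S : Set M} (hS : flowInv ϕ S) : flowInv ϕ.reverse S := fun t => hS (-t)

lemma flowInv.orbit_subset {S : Set M} (hS : flowInv ϕ S) {x : M} (hx : x ∈ S) :
    orbit ϕ x ⊆ S := by
  rintro _ ⟨t, rfl⟩
  exact hS.apply_mem_iff.mpr hx

lemma flowInv.orbit_subset_diff {S X : Set M} (hS : flowInv ϕ S) (hX : flowInv ϕ X) {x : M}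
    (hxS : x ∈ S) (hxX : x ∉ X) : orbit ϕ x ⊆ S \ X := by
  rintro _ ⟨t, rfl⟩
  exact ⟨hS.apply_mem_iff.mpr hxS, fun h => hxX (hX.apply_mem_iff.mp h)⟩

lemma mem_orbit_comm {x y : M} : y ∈ orbit ϕ x ↔ x ∈ orbit ϕ y :=
  @AddAction.mem_orbit_symm _ _ _ ϕ.toAddAction _ _

variable (ϕ) in
lemma orbit_reverse (x : M) : orbit ϕ.reverse x = orbit ϕ x :=
  neg_surjective.range_comp fun t => ϕ t x

variable (ϕ) in
lemma negOrbit_eq_posOrbit_reverse (x : M) : negOrbit ϕ x = posOrbit ϕ.reverse x := by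
  ext y
  constructor <;> rintro ⟨t, ht, rfl⟩
  · exact ⟨-t, neg_nonneg.mpr ht, by rw [Flow.reverse_apply, neg_neg]⟩
  · exact ⟨-t, neg_nonpos.mpr ht, rfl⟩

lemma tendsto_flow_add_apply {ι : Type*} {l : Filter ι} {s c : ι → ℝ} {z u : M} {r : ℝ}
    (hs : Tendsto s l (𝓝 r)) (hu : Tendsto (fun k => ϕ (c k) z) l (𝓝 u)) :
    Tendsto (fun k => ϕ (s k + c k) z) l (𝓝 (ϕ r u)) := by
  simp only [ϕ.map_add]
  exact (ϕ.cont'.tendsto (r, u)).comp (hs.prodMk_nhds hu)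

variable (ϕ) in
lemma isClosed_omegaSet (x : M) : IsClosed (omegaSet ϕ x) :=
  isClosed_iInter fun _ => isClosed_closure

lemma exists_apply_mem_of_mem_omegaSet {x y : M} (hy : y ∈ omegaSet ϕ x) {W : Set M}
    (hW : W ∈ 𝓝 y) (T : ℝ) : ∃ s, T ≤ s ∧ ϕ s x ∈ W := by
  obtain ⟨_, hyW, s, hs, rfl⟩ := mem_closure_iff_nhds.mp (mem_iInter.mp hy T) W hW
  exact ⟨s, hs, hyW⟩

lemma mem_omegaSet_of_tendsto {x y : M} {c : ℕ → ℝ} (hc : Tendsto c atTop atTop)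
    (hy : Tendsto (fun n => ϕ (c n) x) atTop (𝓝 y)) : y ∈ omegaSet ϕ x :=
  mem_iInter.mpr fun t => mem_closure_of_tendsto hy <|
    (hc.eventually_ge_atTop t).mono fun n hn => ⟨c n, hn, rfl⟩

variable (ϕ) in
lemma flowInv_omegaSet (x : M) : flowInv ϕ (omegaSet ϕ x) := by
  refine flowInv_of_forall_apply_mem fun r y hy => mem_iInter.mpr fun t => ?_
  refine map_mem_closure (ϕ.continuous_toFun r) (mem_iInter.mp hy (t - r)) ?_
  rintro _ ⟨s, hs, rfl⟩
  exact ⟨r + s, by linarith, ϕ.map_add r s x⟩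

lemma omegaSet_subset_of_posOrbit_subset {S : Set M} (hS : IsClosed S) {x : M}
    (hx : posOrbit ϕ x ⊆ S) : omegaSet ϕ x ⊆ S :=
  (iInter_subset _ 0).trans (closure_minimal hx hS)

lemma omegaSet_nonempty_of_posOrbit_subset {S : Set M} (hS : IsCompact S) {x : M}
    (hx : posOrbit ϕ x ⊆ S) : (omegaSet ϕ x).Nonempty := by
  obtain ⟨y, -, e, he, hy⟩ := hS.tendsto_subseq fun n => hx ⟨n, n.cast_nonneg, rfl⟩
  exact ⟨y, mem_omegaSet_of_tendsto (tendsto_natCast_atTop_atTop.comp he.tendsto_atTop) hy⟩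

lemma flowInv.posOrbit_subset {S : Set M} (hS : flowInv ϕ S) {x : M} (hx : x ∈ S) :
    posOrbit ϕ x ⊆ S := by
  rintro _ ⟨t, -, rfl⟩
  exact hS.apply_mem_iff.mpr hx

lemma omegaSet_subset_omegaSet {x y : M} (hy : y ∈ omegaSet ϕ x) :
    omegaSet ϕ y ⊆ omegaSet ϕ x :=
  omegaSet_subset_of_posOrbit_subset (isClosed_omegaSet ϕ x)
    ((flowInv_omegaSet ϕ x).posOrbit_subset hy)

variable (ϕ) in
lemma alphaSet_eq_omegaSet_reverse (x : M) :
    alphaSet ϕ x = omegaSet ϕ.reverse x := by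
  have h : ∀ t : ℝ, {y | ∃ s, s ≤ t ∧ ϕ s x = y} = {y | ∃ s, -t ≤ s ∧ ϕ.reverse s x = y} := by
    intro t
    ext y
    constructor <;> rintro ⟨s, hs, rfl⟩
    · exact ⟨-s, neg_le_neg hs, by rw [Flow.reverse_apply, neg_neg]⟩
    · exact ⟨-s, neg_le.mp hs, rfl⟩
  simp only [alphaSet, omegaSet, h]
  exact neg_surjective.iInter_comp fun t => closure {y | ∃ s, t ≤ s ∧ ϕ.reverse s x = y}

variable (ϕ) in
lemma flowInv_alphaSet (x : M) : flowInv ϕ (alphaSet ϕ x) := by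
  intro t
  have h : ϕ.reverse (-t) = ϕ t := funext fun y => by rw [Flow.reverse_apply, neg_neg]
  rw [alphaSet_eq_omegaSet_reverse, ← h]
  exact flowInv_omegaSet ϕ.reverse x (-t)

lemma alphaSet_subset_omegaSet {x y : M} (hy : y ∈ omegaSet ϕ x) :
    alphaSet ϕ y ⊆ omegaSet ϕ x := by
  rw [alphaSet_eq_omegaSet_reverse]
  exact omegaSet_subset_of_posOrbit_subset (isClosed_omegaSet ϕ x)
    ((flowInv_omegaSet ϕ x).reverse.posOrbit_subset hy)


lemma alphaSet_subset_of_negOrbit_subset {S : Set M} (hS : IsClosed S) {x : M}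
    (hx : negOrbit ϕ x ⊆ S) : alphaSet ϕ x ⊆ S := by
  rw [alphaSet_eq_omegaSet_reverse]
  exact omegaSet_subset_of_posOrbit_subset hS (negOrbit_eq_posOrbit_reverse ϕ x ▸ hx)

lemma alphaSet_nonempty_of_negOrbit_subset {S : Set M} (hS : IsCompact S) {x : M}
    (hx : negOrbit ϕ x ⊆ S) : (alphaSet ϕ x).Nonempty := by
  rw [alphaSet_eq_omegaSet_reverse]
  exact omegaSet_nonempty_of_posOrbit_subset hS (negOrbit_eq_posOrbit_reverse ϕ x ▸ hx)

lemma exists_orbit_subset_diff_of_not_subset {S X U : Set M} (hS : flowInv ϕ S)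
    (hX : flowInv ϕ X) (hSU : S ⊆ U) (hSX : ¬ S ⊆ X) : ∃ y ∈ S, orbit ϕ y ⊆ U \ X := by
  obtain ⟨y, hyS, hyX⟩ := not_subset.mp hSX
  exact ⟨y, hyS, (hS.orbit_subset_diff hX hyS hyX).trans (sdiff_subset_sdiff_left hSU)⟩

lemma tendsto_sub_atTop_of_notMem_orbit {z u w : M} {c d : ℕ → ℝ} (hcd : ∀ k, c k ≤ d k)
    (hu : Tendsto (fun k => ϕ (c k) z) atTop (𝓝 u))
    (hw : Tendsto (fun k => ϕ (d k) z) atTop (𝓝 w)) (hwu : w ∉ orbit ϕ u) :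
    Tendsto (fun k => d k - c k) atTop atTop := by
  by_contra hne
  obtain ⟨B, hB⟩ : ∃ B, ∃ᶠ k in atTop, d k - c k < B := by
    simpa [Filter.tendsto_atTop, Filter.not_eventually, Filter.frequently_atTop] using hne
  obtain ⟨ρ, hρ, hρB⟩ := extraction_of_frequently_atTop hB
  obtain ⟨s, -, ρ', hρ', hs⟩ := isCompact_Icc.tendsto_subseq fun j =>
    (⟨sub_nonneg.mpr (hcd (ρ j)), (hρB j).le⟩ : d (ρ j) - c (ρ j) ∈ Icc 0 B)
  have hsub := (hρ.comp hρ').tendsto_atTop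
  have h := tendsto_flow_add_apply hs (hu.comp hsub)
  simp only [Function.comp_apply, sub_add_cancel] at h
  exact hwu ⟨s, tendsto_nhds_unique h (hw.comp hsub)⟩


lemma posOrbit_subset_of_tendsto_of_segments {N : Set M} (hN : IsClosed N) {z u w : M}
    {c d : ℕ → ℝ} (hcd : ∀ k, c k ≤ d k) (hseg : ∀ k, ∀ t ∈ Icc (c k) (d k), ϕ t z ∈ N)
    (hu : Tendsto (fun k => ϕ (c k) z) atTop (𝓝 u))
    (hw : Tendsto (fun k => ϕ (d k) z) atTop (𝓝 w)) (hwu : w ∉ orbit ϕ u) :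
    posOrbit ϕ u ⊆ N := by
  rintro _ ⟨t, ht, rfl⟩
  have hgap := tendsto_sub_atTop_of_notMem_orbit hcd hu hw hwu
  refine hN.mem_of_tendsto (tendsto_flow_add_apply tendsto_const_nhds hu) ?_
  filter_upwards [hgap.eventually_ge_atTop t] with k hk
  exact hseg k _ ⟨by linarith, by linarith⟩

lemma negOrbit_subset_of_tendsto_of_segments {N : Set M} (hN : IsClosed N) {z v w : M}
    {c d : ℕ → ℝ} (hcd : ∀ k, c k ≤ d k) (hseg : ∀ k, ∀ t ∈ Icc (c k) (d k), ϕ t z ∈ N)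
    (hw : Tendsto (fun k => ϕ (c k) z) atTop (𝓝 w))
    (hv : Tendsto (fun k => ϕ (d k) z) atTop (𝓝 v)) (hwv : w ∉ orbit ϕ v) :
    negOrbit ϕ v ⊆ N := by
  rw [negOrbit_eq_posOrbit_reverse]
  refine posOrbit_subset_of_tendsto_of_segments (c := fun k => -d k) (d := fun k => -c k) hN
    (fun k => neg_le_neg (hcd k)) (fun k t ht => hseg k (-t) ⟨le_neg.mpr ht.2, neg_le.mpr ht.1⟩)
    ?_ ?_ (by rwa [orbit_reverse])
  · simpa using hv
  · simpa using hw

lemma exists_segment_of_mem_omegaSet {N : Set M} (hN : IsClosed N) {z p q : M}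
    (hp : p ∈ omegaSet ϕ z) (hpN : p ∈ interior N) (hq : q ∈ omegaSet ϕ z) (hqN : q ∉ N)
    (T : ℝ) {δ : ℝ} (hδ : 0 < δ) :
    ∃ c a d, T ≤ c ∧ c ≤ a ∧ a ≤ d ∧ dist (ϕ a z) p < δ ∧
      ϕ c z ∉ interior N ∧ ϕ d z ∉ interior N ∧ ∀ t ∈ Icc c d, ϕ t z ∈ N := by
  have hγ : Continuous fun t => ϕ t z := ϕ.continuous continuous_id continuous_const
  have hNq : Nᶜ ∈ 𝓝 q := hN.isOpen_compl.mem_nhds hqN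
  obtain ⟨b, hTb, hb⟩ := exists_apply_mem_of_mem_omegaSet hq hNq T
  obtain ⟨a, hba, ha, hap⟩ := exists_apply_mem_of_mem_omegaSet hp
    (inter_mem (isOpen_interior.mem_nhds hpN) (ball_mem_nhds p hδ)) b
  obtain ⟨b', hab', hb'⟩ := exists_apply_mem_of_mem_omegaSet hq hNq a
  obtain ⟨c, hc, hcN, hca⟩ :=
    exists_last_notMem_before hγ isOpen_interior hba fun h => hb (interior_subset h)
  obtain ⟨d, hd, hdN, had⟩ :=
    exists_first_notMem_after hγ isOpen_interior hab' fun h => hb' (interior_subset h)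
  have hcd : c < d := (hc.2.lt_of_ne fun h => hcN (h ▸ ha)).trans_le hd.1
  have hIoo : Ioo c d ⊆ (fun t => ϕ t z) ⁻¹' interior N := fun t ht =>
    (le_total t a).elim (fun h => hca t ⟨ht.1, h⟩) (fun h => had t ⟨h, ht.2⟩)
  have hIcc : Icc c d ⊆ (fun t => ϕ t z) ⁻¹' N := by
    rw [← closure_Ioo hcd.ne]
    exact (closure_mono hIoo).trans <| (hγ.closure_preimage_subset _).trans <|
      preimage_mono (closure_minimal interior_subset hN)
  exact ⟨c, a, d, hTb.trans hc.1, hc.2, hd.1, hap, hcN, hdN, hIcc⟩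

lemma exists_posOrbit_negOrbit_subset {N : Set M} (hN : IsCompact N) {z p q : M}
    (hp : p ∈ omegaSet ϕ z) (hpN : orbit ϕ p ⊆ interior N) (hq : q ∈ omegaSet ϕ z)
    (hqN : q ∉ N) :
    ∃ u ∈ omegaSet ϕ z, ∃ v ∈ omegaSet ϕ z, u ∉ interior N ∧ v ∉ interior N ∧
      posOrbit ϕ u ⊆ N ∧ negOrbit ϕ v ⊆ N := by
  choose c a d hc hca had hap hcN hdN hseg using fun n : ℕ =>
    exists_segment_of_mem_omegaSet hN.isClosed hp (hpN ⟨0, ϕ.map_zero_apply p⟩) hq hqN n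
      (Nat.one_div_pos_of_nat (n := n))
  have hcd n : c n ≤ d n := (hca n).trans (had n)
  obtain ⟨⟨u, v⟩, ⟨⟨-, hu⟩, ⟨-, hv⟩⟩, e, he, huv⟩ :=
    ((hN.diff isOpen_interior).prod (hN.diff isOpen_interior)).tendsto_subseq
      (x := fun n => (ϕ (c n) z, ϕ (d n) z)) fun n =>
        ⟨⟨hseg n _ ⟨le_rfl, hcd n⟩, hcN n⟩, ⟨hseg n _ ⟨hcd n, le_rfl⟩, hdN n⟩⟩
  have hc_top : Tendsto (fun k => c (e k)) atTop atTop :=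
    tendsto_atTop_mono (fun k => (Nat.cast_le.mpr he.le_apply).trans (hc (e k)))
      tendsto_natCast_atTop_atTop
  have hap_lim : Tendsto (fun k => ϕ (a (e k)) z) atTop (𝓝 p) :=
    tendsto_iff_dist_tendsto_zero.mpr <| squeeze_zero (fun _ => dist_nonneg)
      (fun k => (hap (e k)).le) (tendsto_one_div_add_atTop_nhds_zero_nat.comp he.tendsto_atTop)
  have hpu : p ∉ orbit ϕ u := fun h => hu (hpN (mem_orbit_comm.mp h))
  have hpv : p ∉ orbit ϕ v := fun h => hv (hpN (mem_orbit_comm.mp h))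
  refine ⟨u, mem_omegaSet_of_tendsto hc_top huv.fst_nhds,
    v, mem_omegaSet_of_tendsto (tendsto_atTop_mono (fun k => hcd (e k)) hc_top) huv.snd_nhds,
    hu, hv, ?_, ?_⟩
  · exact posOrbit_subset_of_tendsto_of_segments hN.isClosed (fun k => hca (e k))
      (fun k t ht => hseg (e k) t ⟨ht.1, ht.2.trans (had (e k))⟩) huv.fst_nhds hap_lim hpu
  · exact negOrbit_subset_of_tendsto_of_segments hN.isClosed (fun k => had (e k))
      (fun k t ht => hseg (e k) t ⟨(hca (e k)).trans ht.1, ht.2⟩) hap_lim huv.snd_nhds hpv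

end Flow

theorem orbit_in_omega_near_nonstagnant_general
    {M : Type*} [MetricSpace M] [LocallyCompactSpace M]
    (ϕ : Flow ℝ M) (X : Set M)
    (hXc : IsCompact X) (hXinv : flowInv ϕ X)
    (hns : ¬ Stagnant ϕ X)
    (z : M) (hz₁ : (omegaSet ϕ z ∩ X).Nonempty) (hz₂ : ¬ omegaSet ϕ z ⊆ X) :
    ∀ U ∈ 𝓝ˢ X, ∃ y ∈ omegaSet ϕ z, orbit ϕ y ⊆ U \ X := by
  intro U hU
  by_contra! hcon
  obtain ⟨p, hpω, hpX⟩ := hz₁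
  obtain ⟨q, hqω, hqX⟩ := not_subset.mp hz₂
  obtain ⟨N, hN, hXN, hNU, hqN⟩ := exists_isCompact_subset_interior_of_notMem hXc hU hqX
  obtain ⟨u, huω, v, hvω, hu, hv, huN, hvN⟩ :=
    exists_posOrbit_negOrbit_subset hN hpω ((hXinv.orbit_subset hpX).trans hXN) hqω hqN
  have hωu : omegaSet ϕ u ⊆ X := by
    by_contra h
    obtain ⟨y, hy, hyU⟩ := exists_orbit_subset_diff_of_not_subset (flowInv_omegaSet ϕ u) hXinv
      ((omegaSet_subset_of_posOrbit_subset hN.isClosed huN).trans hNU) h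
    exact hcon y (omegaSet_subset_omegaSet huω hy) hyU
  have hαv : alphaSet ϕ v ⊆ X := by
    by_contra h
    obtain ⟨y, hy, hyU⟩ := exists_orbit_subset_diff_of_not_subset (flowInv_alphaSet ϕ v) hXinv
      ((alphaSet_subset_of_negOrbit_subset hN.isClosed hvN).trans hNU) h
    exact hcon y (alphaSet_subset_omegaSet hvω hy) hyU
  exact hns ⟨v, fun h => hv (hXN h), u, fun h => hu (hXN h),
    alphaSet_nonempty_of_negOrbit_subset hN hvN, hαv,
    omegaSet_nonempty_of_posOrbit_subset hN huN, hωu⟩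

theorem orbit_in_omega_near_nonstagnant
    {M : Type*} [MetricSpace M] [LocallyCompactSpace M]
    (ϕ : Flow ℝ M) (X : Set M)
    (hXne : X.Nonempty) (hXc : IsCompact X) (hXinv : flowInv ϕ X)
    (hproper : X ≠ Set.univ) (hns : ¬ Stagnant ϕ X)
    (z : M) (hz₁ : (omegaSet ϕ z ∩ X).Nonempty) (hz₂ : ¬ omegaSet ϕ z ⊆ X) :
    ∀ U ∈ 𝓝ˢ X, ∃ y ∈ omegaSet ϕ z, orbit ϕ y ⊆ U \ X :=
  orbit_in_omega_near_nonstagnant_general ϕ X hXc hXinv hns z hz₁ hz₂
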